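/- In a non-reroutable (m,n)-graph G with distinct sources, the shortest φ-AA-sequence has length at most 1, and likewise the shortest ψ-AA-sequence has length at most 1. (If some φ-AA-sequence of length at least 2 were shortest, one could exhibit a directed cycle in G, contradicting acyclicity.) -/
import Mathlib


/-- A finite directed multigraph. -/
structure MultiDigraph where
  V : Type
  E : Type
  fintV : Fintype V
  fintE : Fintype E
  src : E → V
  dst : E → V

namespace MultiDigraph

/-- `p` is a (nonempty) directed path from `u` to `v`, given as its list of edges. -/
def IsPathFrom (G : MultiDigraph) (u v : G.V) (p : List G.E) : Prop :=
  p ≠ [] ∧ List.Chain' (fun e f => G.dst e = G.src f) p ∧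
    (∀ e ∈ p.head?, G.src e = u) ∧ ∀ e ∈ p.getLast?, G.dst e = v

/-- `G` is acyclic: there is no (nonempty) directed path from a vertex to itself. -/
def Acyclic (G : MultiDigraph) : Prop :=
  ∀ (v : G.V) (p : List G.E), ¬ G.IsPathFrom v v p

/-- `α` is a family of `c` pairwise edge-disjoint directed paths from `u` to `v`. -/
def MengerSystem (G : MultiDigraph) (u v : G.V) (c : ℕ) (α : Fin c → List G.E) : Prop :=
  (∀ i, G.IsPathFrom u v (α i)) ∧ ∀ i j, i ≠ j → ∀ e, e ∈ α i → e ∉ α j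

/-- The min-cut between `u` and `v` equals `c`: by Menger's theorem, this means the
maximum number of pairwise edge-disjoint directed paths from `u` to `v` is exactly `c`. -/
def MinCut (G : MultiDigraph) (u v : G.V) (c : ℕ) : Prop :=
  (∃ α : Fin c → List G.E, G.MengerSystem u v c α) ∧
    ¬∃ α : Fin (c + 1) → List G.E, G.MengerSystem u v (c + 1) α

/-- The Menger path system `α` from `u` to `v` is the unique one (as a set of paths):
the group `α` is not reroutable. -/
def NonReroutable (G : MultiDigraph) (u v : G.V) (c : ℕ) (α : Fin c → List G.E) : Prop :=
  ∀ β : Fin c → List G.E, G.MengerSystem u v c β → Set.range β = Set.range α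

end MultiDigraph

open MultiDigraph

/-- The block `s` occurs on the path `p` (as a contiguous subpath) strictly before the
block `t`. -/
def OrderedOn {E : Type} (p s t : List E) : Prop :=
  ∃ u v w, p = u ++ s ++ v ++ t ++ w

/-- `s` is a merging (a maximal merged subpath) of the paths `p` and `q`: a nonempty
common contiguous subpath, whose first edge is immediately preceded on `p` and on `q` by
two distinct edges, and which cannot be extended forward as a common subpath. -/
def MergedSub {E : Type} (p q s : List E) : Prop :=
  s ≠ [] ∧ s <:+: p ∧ s <:+: q ∧
    (∃ f g, f ≠ g ∧ (f :: s) <:+: p ∧ (g :: s) <:+: q) ∧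
    ∀ e, ¬((s ++ [e]) <:+: p ∧ (s ++ [e]) <:+: q)

/-- `s` is the starting subpath of the paths `p` and `q`: a nonempty maximal common
prefix. -/
def StartSub {E : Type} (p q s : List E) : Prop :=
  s ≠ [] ∧ s <+: p ∧ s <+: q ∧ ∀ e, ¬((s ++ [e]) <+: p ∧ (s ++ [e]) <+: q)

/-- `G` together with `φ` and `ψ` is a non-reroutable `(m, n)`-graph: `G` is acyclic, the
sinks are distinct, the min-cut from `S₁` to `R₁` is `m` and from `S₂` to `R₂` is `n`,
`φ` and `ψ` are Menger path systems for the two pairs covering all edges of `G`, and both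
systems are unique (non-reroutable). -/
def MNGraph (G : MultiDigraph) (S1 S2 R1 R2 : G.V) (m n : ℕ)
    (φ : Fin m → List G.E) (ψ : Fin n → List G.E) : Prop :=
  G.Acyclic ∧ R1 ≠ R2 ∧ G.MinCut S1 R1 m ∧ G.MinCut S2 R2 n ∧
    G.MengerSystem S1 R1 m φ ∧ G.MengerSystem S2 R2 n ψ ∧
    (∀ e : G.E, (∃ i, e ∈ φ i) ∨ ∃ j, e ∈ ψ j) ∧
    G.NonReroutable S1 R1 m φ ∧ G.NonReroutable S2 R2 n ψ

/-- A visit of the alternating (AA) procedure: a triple `(a, b, s)` recording the merged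
(or starting) subpath `s` together with its associated path pair `(φ_a, ψ_b)`. -/
abbrev Visit (G : MultiDigraph) (m n : ℕ) := Fin m × Fin n × List G.E

section AA

variable {G : MultiDigraph} {m n : ℕ}

/-- The visit `v` is a merged subpath of the pair `(φ_{v.1}, ψ_{v.2.1})`. -/
def MS (φ : Fin m → List G.E) (ψ : Fin n → List G.E) (v : Visit G m n) : Prop :=
  MergedSub (φ v.1) (ψ v.2.1) v.2.2

/-- Identical-sources variant: the visit `v` is a merged subpath, or the starting subpath
shared by `φ_a` and `ψ_a` (common source, paired starting subpaths). -/
def MSI (φ ψ : Fin m → List G.E) (v : Visit G m m) : Prop :=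
  MS φ ψ v ∨ (v.1 = v.2.1 ∧ StartSub (φ v.1) (ψ v.1) v.2.2)

/-- One step of the AA procedure going forward along the φ-path associated with `v`:
`w` is the first visit on `φ_{v.1}` strictly after `v`. -/
def StepAlong (φ : Fin m → List G.E) (P : Visit G m n → Prop) (v w : Visit G m n) : Prop :=
  w.1 = v.1 ∧ P w ∧ OrderedOn (φ v.1) v.2.2 w.2.2 ∧
    ∀ u, P u → u.1 = v.1 →
      ¬(OrderedOn (φ v.1) v.2.2 u.2.2 ∧ OrderedOn (φ v.1) u.2.2 w.2.2)

/-- One step of the AA procedure going backward against the ψ-path associated with `v`: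
`w` is the nearest visit on `ψ_{v.2.1}` strictly before `v`. -/
def StepAgainst (ψ : Fin n → List G.E) (P : Visit G m n → Prop) (v w : Visit G m n) : Prop :=
  w.2.1 = v.2.1 ∧ P w ∧ OrderedOn (ψ v.2.1) w.2.2 v.2.2 ∧
    ∀ u, P u → u.2.1 = v.2.1 →
      ¬(OrderedOn (ψ v.2.1) w.2.2 u.2.2 ∧ OrderedOn (ψ v.2.1) u.2.2 v.2.2)

/-- There is no visit after `v` on its φ-path (the forward walk reaches `R₁`). -/
def NoNextAlong (φ : Fin m → List G.E) (P : Visit G m n → Prop) (v : Visit G m n) : Prop :=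
  ∀ u, P u → u.1 = v.1 → ¬ OrderedOn (φ v.1) v.2.2 u.2.2

/-- There is no visit before `v` on its ψ-path (the backward walk reaches `S₂`). -/
def NoNextAgainst (ψ : Fin n → List G.E) (P : Visit G m n → Prop) (v : Visit G m n) : Prop :=
  ∀ u, P u → u.2.1 = v.2.1 → ¬ OrderedOn (ψ v.2.1) u.2.2 v.2.2

/-- `AAChain φ ψ P dir v L` : starting from the visit `v`, the alternating procedure
(next step backward against a ψ-path if `dir = true`, forward along a φ-path if
`dir = false`) visits exactly the list `L` of further visits and then terminates. -/
inductive AAChain (φ : Fin m → List G.E) (ψ : Fin n → List G.E) (P : Visit G m n → Prop) :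
    Bool → Visit G m n → List (Visit G m n) → Prop
  | stopAgainst (v : Visit G m n) : NoNextAgainst ψ P v → AAChain φ ψ P true v []
  | stopAlong (v : Visit G m n) : NoNextAlong φ P v → AAChain φ ψ P false v []
  | consAgainst (v w : Visit G m n) (rest : List (Visit G m n)) :
      StepAgainst ψ P v w → AAChain φ ψ P false w rest → AAChain φ ψ P true v (w :: rest)
  | consAlong (v w : Visit G m n) (rest : List (Visit G m n)) :
      StepAlong φ P v w → AAChain φ ψ P true w rest → AAChain φ ψ P false v (w :: rest)

/-- `L` is the `φ_i`-AA-sequence: either `φ_i` carries no visit and `L` is empty, or `L`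
starts with the first visit on `φ_i` (go along `φ_i` from `S₁` to the first merged
subpath) and then alternates: against the associated ψ-path, along the associated φ-path,
and so on, until termination.  Its length is the number of merged subpaths visited. -/
def IsPhiAA (φ : Fin m → List G.E) (ψ : Fin n → List G.E) (P : Visit G m n → Prop)
    (i : Fin m) (L : List (Visit G m n)) : Prop :=
  (L = [] ∧ ∀ u, P u → u.1 ≠ i) ∨
    ∃ v rest, L = v :: rest ∧ v.1 = i ∧ P v ∧
      (∀ u, P u → u.1 = i → ¬ OrderedOn (φ i) u.2.2 v.2.2) ∧
      AAChain φ ψ P true v rest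

/-- `L` is the `ψ_j`-AA-sequence: either `ψ_j` carries no visit and `L` is empty, or `L`
starts with the last visit on `ψ_j` (go against `ψ_j` from `R₂` to the first merged
subpath encountered) and then alternates: along the associated φ-path, against the
associated ψ-path, and so on, until termination. -/
def IsPsiAA (φ : Fin m → List G.E) (ψ : Fin n → List G.E) (P : Visit G m n → Prop)
    (j : Fin n) (L : List (Visit G m n)) : Prop :=
  (L = [] ∧ ∀ u, P u → u.2.1 ≠ j) ∨
    ∃ v rest, L = v :: rest ∧ v.2.1 = j ∧ P v ∧
      (∀ u, P u → u.2.1 = j → ¬ OrderedOn (ψ j) v.2.2 u.2.2) ∧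
      AAChain φ ψ P false v rest

end AA

namespace AuxAA
variable {G : MultiDigraph}

def Rel (G : MultiDigraph) (x y : G.V) : Prop := ∃ p, G.IsPathFrom x y p

lemma rel_trans {x y z : G.V} (h1 : Rel G x y) (h2 : Rel G y z) : Rel G x z := by
  obtain ⟨p, hp0, hp1, hp2, hp3⟩ := h1
  obtain ⟨q, hq0, hq1, hq2, hq3⟩ := h2
  refine ⟨p ++ q, by simp [hp0], ?_, ?_, ?_⟩
  · exact List.IsChain.append hp1 hq1 (fun a ha b hb => (hp3 a ha).trans (hq2 b hb).symm)
  · intro e he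
    rw [List.head?_append_of_ne_nil _ hp0] at he
    exact hp2 e he
  · intro e he
    rw [List.getLast?_append_of_ne_nil _ hq0] at he
    exact hq3 e he

lemma rel_irrefl (hG : G.Acyclic) (x : G.V) : ¬ Rel G x x :=
  fun ⟨p, hp⟩ => hG x p hp

open Classical in
noncomputable def cnt (G : MultiDigraph) (x : G.V) : ℕ :=
  haveI := G.fintV
  (Finset.univ.filter (fun y => Rel G y x)).card

open Classical in
noncomputable def cnt' (G : MultiDigraph) (x : G.V) : ℕ :=
  haveI := G.fintV
  (Finset.univ.filter (fun y => Rel G x y)).card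

open Classical in
lemma cnt_lt (hG : G.Acyclic) {x y : G.V} (h : Rel G x y) : cnt G x < cnt G y := by
  apply Finset.card_lt_card
  constructor
  · intro z hz
    simp only [Finset.mem_filter, Finset.mem_univ, true_and] at *
    exact rel_trans hz h
  · intro hsub
    have := hsub (show x ∈ _ by
      simp only [Finset.mem_filter, Finset.mem_univ, true_and]; exact h)
    simp only [Finset.mem_filter, Finset.mem_univ, true_and] at this
    exact rel_irrefl hG x this

open Classical in
lemma cnt'_lt (hG : G.Acyclic) {x y : G.V} (h : Rel G x y) : cnt' G y < cnt' G x := by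
  apply Finset.card_lt_card
  constructor
  · intro z hz
    simp only [Finset.mem_filter, Finset.mem_univ, true_and] at *
    exact rel_trans h hz
  · intro hsub
    have := hsub (show y ∈ _ by
      simp only [Finset.mem_filter, Finset.mem_univ, true_and]; exact h)
    simp only [Finset.mem_filter, Finset.mem_univ, true_and] at this
    exact rel_irrefl hG y this

lemma rel_of_orderedOn {p s t : List G.E}
    (hp : List.Chain' (fun e f => G.dst e = G.src f) p)
    (hs : s ≠ []) (ht : t ≠ []) (h : OrderedOn p s t) :
    Rel G (G.src (s.head hs)) (G.src (t.head ht)) := by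
  obtain ⟨a, b, c, rfl⟩ := h
  have hinf : ((s ++ b) ++ t) <:+: (a ++ s ++ b ++ t ++ c) :=
    ⟨a, c, by simp [List.append_assoc]⟩
  have hchain := hp.infix hinf
  rw [List.isChain_append] at hchain
  refine ⟨s ++ b, by simp [hs], hchain.1, ?_, ?_⟩
  · intro e he
    rw [List.head?_append_of_ne_nil _ hs, List.head?_eq_head hs] at he
    simp at he; rw [he]
  · intro e he
    exact hchain.2.2 e he (t.head ht) (by rw [List.head?_eq_head ht]; rfl)

end AuxAA

/-- In a non-reroutable `(m, n)`-graph `G` with distinct sources, the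
shortest φ-AA-sequence has length at most 1, and likewise the shortest ψ-AA-sequence has
length at most 1: some φ-AA-sequence and some ψ-AA-sequence have length at most 1. -/
theorem shortest_AA_sequence_length_le_one
    (G : MultiDigraph) (S1 S2 R1 R2 : G.V) (m n : ℕ)
    (φ : Fin m → List G.E) (ψ : Fin n → List G.E)
    (hG : MNGraph G S1 S2 R1 R2 m n φ ψ) (hS : S1 ≠ S2) (hm : 0 < m) (hn : 0 < n) :
    (∃ (i : Fin m) (L : List (Visit G m n)),
        IsPhiAA φ ψ (MS φ ψ) i L ∧ L.length ≤ 1) ∧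
      ∃ (j : Fin n) (L : List (Visit G m n)),
        IsPsiAA φ ψ (MS φ ψ) j L ∧ L.length ≤ 1 := by
  obtain ⟨hac, -, -, -, hφ, hψ, -, -, -⟩ := hG
  by_cases hex : ∃ v : Visit G m n, MS φ ψ v
  · obtain ⟨v0, hv0⟩ := hex
    have hne : ∀ v : Visit G m n, MS φ ψ v → v.2.2 ≠ [] := fun v hv => hv.1
    constructor
    · set S : Set ℕ := {k | ∃ v : Visit G m n, MS φ ψ v ∧
        ∃ h : v.2.2 ≠ [], AuxAA.cnt G (G.src (v.2.2.head h)) = k} with hSdef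
    
      have hS : S.Nonempty := ⟨_, v0, hv0, hv0.1, rfl⟩
      obtain ⟨v, hv, hvne, hveq⟩ := Nat.sInf_mem hS
      have hmin : ∀ u, MS φ ψ u → ∀ h : u.2.2 ≠ [],
          ¬ AuxAA.Rel G (G.src (u.2.2.head h)) (G.src (v.2.2.head hvne)) := by
        intro u hu h hrel
        have h1 := AuxAA.cnt_lt hac hrel
        have h2 : sInf S ≤ AuxAA.cnt G (G.src (u.2.2.head h)) :=
          Nat.sInf_le ⟨u, hu, h, rfl⟩
        omega
      refine ⟨v.1, [v], Or.inr ⟨v, [], rfl, rfl, hv, ?_, AAChain.stopAgainst v ?_⟩, by simp⟩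
      · intro u hu _ hord
        exact hmin u hu (hne u hu)
          (AuxAA.rel_of_orderedOn (hφ.1 v.1).2.1 (hne u hu) hvne hord)
      · intro u hu _ hord
        exact hmin u hu (hne u hu)
          (AuxAA.rel_of_orderedOn (hψ.1 v.2.1).2.1 (hne u hu) hvne hord)
    · set S : Set ℕ := {k | ∃ v : Visit G m n, MS φ ψ v ∧
        ∃ h : v.2.2 ≠ [], AuxAA.cnt' G (G.src (v.2.2.head h)) = k} with hSdef
      have hS : S.Nonempty := ⟨_, v0, hv0, hv0.1, rfl⟩
      obtain ⟨v, hv, hvne, hveq⟩ := Nat.sInf_mem hS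
      have hmax : ∀ u, MS φ ψ u → ∀ h : u.2.2 ≠ [],
          ¬ AuxAA.Rel G (G.src (v.2.2.head hvne)) (G.src (u.2.2.head h)) := by
        intro u hu h hrel
        have h1 := AuxAA.cnt'_lt hac hrel
        have h2 : sInf S ≤ AuxAA.cnt' G (G.src (u.2.2.head h)) :=
          Nat.sInf_le ⟨u, hu, h, rfl⟩
        omega
      refine ⟨v.2.1, [v], Or.inr ⟨v, [], rfl, rfl, hv, ?_, AAChain.stopAlong v ?_⟩, by simp⟩
      · intro u hu _ hord
        exact hmax u hu (hne u hu)
          (AuxAA.rel_of_orderedOn (hψ.1 v.2.1).2.1 hvne (hne u hu) hord)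
      · intro u hu _ hord
        exact hmax u hu (hne u hu)
          (AuxAA.rel_of_orderedOn (hφ.1 v.1).2.1 hvne (hne u hu) hord)
  · push_neg at hex
    exact ⟨⟨⟨0, hm⟩, [], Or.inl ⟨rfl, fun u hu => absurd hu (hex u)⟩, by simp⟩,
      ⟨⟨0, hn⟩, [], Or.inl ⟨rfl, fun u hu => absurd hu (hex u)⟩, by simp⟩⟩
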